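/- Let I be a commutativity ideal of KQ with minimal generating set I₂. Every monomial m ∈ I is equivalent (under allowed transpositions) to a monomial of the form p·ab·q, where ab is a quadratic monomial with ab ∈ I and p, q are paths. Conversely, every monomial equivalent to a monomial of the form p·ab·q with ab ∈ I lies in I. -/

import Mathlib

/-! Common vocabulary for partly (anti-)commutative quiver algebras. -/

open Quiver

/-- The bundled arrows of a quiver. -/
def QArr (V : Type) [Quiver.{0} V] : Type := Σ a b : V, a ⟶ b

variable {V : Type} [Quiver.{0} V]

/-- Source of a bundled arrow. -/
def QArr.src (e : QArr V) : V := e.1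

/-- Target of a bundled arrow. -/
def QArr.tgt (e : QArr V) : V := e.2.1

/-- A bundled arrow is a loop if its source equals its target. -/
def QArr.IsLoop (e : QArr V) : Prop := e.src = e.tgt

/-- A path in a quiver bundled together with its endpoints. -/
structure QPath (V : Type) [Quiver.{0} V] : Type where
  src : V
  tgt : V
  path : Quiver.Path src tgt

namespace QPath

/-- The length of a bundled path. -/
def length (p : QPath V) : ℕ := p.path.length

/-- Composition of bundled paths, defined when the endpoints match. -/
def comp (p q : QPath V) (h : p.tgt = q.src) : QPath V :=
  ⟨p.src, q.tgt, p.path.comp (q.path.cast h.symm rfl)⟩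

/-- The bundled path of length one corresponding to an arrow. -/
def ofArrow (e : QArr V) : QPath V := ⟨e.1, e.2.1, Quiver.Hom.toPath e.2.2⟩

/-- The trivial path at a vertex. -/
def triv (v : V) : QPath V := ⟨v, v, Quiver.Path.nil⟩

end QPath

/-- The list of bundled arrows of a path, in order. -/
def Quiver.Path.arrList : ∀ {a b : V}, Quiver.Path a b → List (QArr V)
  | _, _, Quiver.Path.nil => []
  | _, _, Quiver.Path.cons p e => p.arrList ++ [⟨_, _, e⟩]

/-- The list of bundled arrows of a bundled path. -/
def QPath.arrows (p : QPath V) : List (QArr V) := p.path.arrList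

/-- A quiver is connected if any two vertices are joined by a sequence of arrows,
disregarding directions. -/
def QuiverConnected (V : Type) [Quiver.{0} V] : Prop :=
  ∀ a b : V, Relation.ReflTransGen (fun x y => Nonempty (x ⟶ y) ∨ Nonempty (y ⟶ x)) a b

/-- A realization of the path algebra `KQ` of a quiver `Q` over `K`: a `K`-algebra `A`
equipped with a `K`-basis indexed by the paths of `Q`, such that multiplication of basis
elements is given by concatenation of paths (and is `0` on non-composable paths), and such
that the identity is the sum of the classes of the trivial paths. -/
structure PathAlgebraSpec (K : Type) [Field K] (V : Type) [Quiver.{0} V]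
    (A : Type) [Ring A] [Algebra K A] : Type where
  basis : Module.Basis (QPath V) K A
  basis_mul : ∀ (p q : QPath V) (h : p.tgt = q.src),
    basis p * basis q = basis (p.comp q h)
  basis_mul_zero : ∀ p q : QPath V, p.tgt ≠ q.src → basis p * basis q = 0
  basis_one : (1 : A) = ∑ᶠ v : V, basis (QPath.triv v)

variable {K A : Type} [Field K] [Ring A] [Algebra K A]

/-- The element of the path algebra corresponding to an arrow. -/
noncomputable def PathAlgebraSpec.arr (S : PathAlgebraSpec K V A) (e : QArr V) : A :=
  S.basis (QPath.ofArrow e)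

/-- A generating set for an (anti-)commutativity ideal: a set `mono` of pairs of arrows
recording the quadratic monomial generators `ab`, and a set `comm` of pairs of arrows
recording the (anti-)commutativity generators `ab ∓ ba`. -/
structure QuadGens (V : Type) [Quiver.{0} V] : Type where
  mono : Set (QArr V × QArr V)
  comm : Set (QArr V × QArr V)

/-- Minimality of a generating set: if `ab ∓ ba` is one of the (anti-)commutativity
generators, then neither `ab` nor `ba` is one of the monomial generators. -/
def QuadGens.Minimal (G : QuadGens V) : Prop :=
  ∀ p ∈ G.comm, (p.1, p.2) ∉ G.mono ∧ (p.2, p.1) ∉ G.mono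

/-- The set of generators of an (anti-)commutativity ideal determined by `G`; for `ε = 1`
the binomial generators are the commutativity relations `ab - ba`, for `ε = -1` they are
the anti-commutativity relations `ab + ba`. -/
def QuadGens.gensSet (G : QuadGens V) (S : PathAlgebraSpec K V A) (ε : K) : Set A :=
  {x | ∃ p ∈ G.mono, x = S.arr p.1 * S.arr p.2} ∪
  {x | ∃ p ∈ G.comm, x = S.arr p.1 * S.arr p.2 - ε • (S.arr p.2 * S.arr p.1)}

/-- The span of all paths of length at least `n`; this is the `n`-th power of the
arrow ideal `J` of the path algebra. -/
def PathAlgebraSpec.geSpan (S : PathAlgebraSpec K V A) (n : ℕ) : Submodule K A :=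
  Submodule.span K (S.basis '' {p | n ≤ p.length})

/-- The span of all paths of length exactly `n`: the degree-`n` homogeneous component
of the path algebra. -/
def PathAlgebraSpec.degSpan (S : PathAlgebraSpec K V A) (n : ℕ) : Submodule K A :=
  Submodule.span K (S.basis '' {p | p.length = n})

/-- An ideal `I` of the path algebra is admissible if `Jⁿ ⊆ I ⊆ J²` for some `n ≥ 2`,
where `J` is the arrow ideal. -/
def PathAlgebraSpec.IsAdmissible (S : PathAlgebraSpec K V A) (I : TwoSidedIdeal A) : Prop :=
  ∃ n : ℕ, 2 ≤ n ∧ (S.geSpan n : Set A) ⊆ (I : Set A) ∧ (I : Set A) ⊆ (S.geSpan 2 : Set A)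

/-- An ideal is square-free if it contains no nonzero square `a²` of an arrow, i.e. no
square of a loop. -/
def PathAlgebraSpec.IsSquareFree (S : PathAlgebraSpec K V A) (I : TwoSidedIdeal A) : Prop :=
  ∀ e : QArr V, e.IsLoop → S.arr e * S.arr e ∉ I

/-- The generating set of the orthogonal ideal `I⊥`: the relations `ab ± ba` obtained by
flipping the sign of the (anti-)commutativity generators of `I`, together with all quadratic
monomials `cd` with `cd ≠ 0` and `cd ≠ dc` in `KQ/I`. -/
def QuadGens.perpGens (G : QuadGens V) (S : PathAlgebraSpec K V A) (ε : K)
    (I : TwoSidedIdeal A) : Set A :=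
  {x | ∃ p ∈ G.comm, x = S.arr p.1 * S.arr p.2 + ε • (S.arr p.2 * S.arr p.1)} ∪
  {x | ∃ c d : QArr V, S.arr c * S.arr d ∉ I ∧ S.arr c * S.arr d - S.arr d * S.arr c ∉ I ∧
    x = S.arr c * S.arr d}

/-- The orthogonal ideal `I⊥` of an (anti-)commutativity ideal. -/
def QuadGens.perpIdeal (G : QuadGens V) (S : PathAlgebraSpec K V A) (ε : K)
    (I : TwoSidedIdeal A) : TwoSidedIdeal A :=
  TwoSidedIdeal.span (G.perpGens S ε I)

/-- The directed-edge relation of the generator graph `Γ_{I⊥}` of the orthogonal ideal: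
there is a directed edge `c → d` for each quadratic monomial generator `cd` of `I⊥`,
i.e. whenever `cd ≠ 0` and `cd ≠ dc` in `KQ/I`. -/
def QuadGens.perpDirEdge (S : PathAlgebraSpec K V A) (I : TwoSidedIdeal A)
    (c d : QArr V) : Prop :=
  S.arr c * S.arr d ∉ I ∧ S.arr c * S.arr d - S.arr d * S.arr c ∉ I

/-- A directed graph (given by its edge relation) contains a directed cycle. -/
def HasDirectedCycle {α : Type} (E : α → α → Prop) : Prop :=
  ∃ a : α, Relation.TransGen E a a

/- The quotient algebra `KQ/I`. -/

/-- The `K`-algebra structure on the quotient of a `K`-algebra by a ring congruence. -/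
noncomputable instance RingCon.quotientAlgebra' (c : RingCon A) : Algebra K c.Quotient where
  algebraMap :=
    { toFun := fun k => ((algebraMap K A k : A) : c.Quotient)
      map_one' := by
        show ((algebraMap K A 1 : A) : c.Quotient) = 1
        rw [map_one, c.coe_one]
      map_mul' := fun x y => by
        show ((algebraMap K A (x * y) : A) : c.Quotient) =
          ((algebraMap K A x : A) : c.Quotient) * ((algebraMap K A y : A) : c.Quotient)
        rw [map_mul, c.coe_mul]
      map_zero' := by
        show ((algebraMap K A 0 : A) : c.Quotient) = 0
        rw [map_zero, c.coe_zero]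
      map_add' := fun x y => by
        show ((algebraMap K A (x + y) : A) : c.Quotient) =
          ((algebraMap K A x : A) : c.Quotient) + ((algebraMap K A y : A) : c.Quotient)
        rw [map_add, c.coe_add] }
  commutes' k x := by
    induction x using Quotient.inductionOn' with
    | h r =>
      show ((algebraMap K A k : A) : c.Quotient) * (r : c.Quotient) =
        (r : c.Quotient) * ((algebraMap K A k : A) : c.Quotient)
      rw [← c.coe_mul, ← c.coe_mul, Algebra.commutes]
  smul_def' k x := by
    induction x using Quotient.inductionOn' with
    | h r =>
      show ((k • r : A) : c.Quotient) =
        ((algebraMap K A k : A) : c.Quotient) * (r : c.Quotient)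
      rw [← c.coe_mul, Algebra.smul_def]

/-- The quotient algebra `A/I` of the path algebra by a two-sided ideal. -/
abbrev TwoSidedIdeal.Qt (I : TwoSidedIdeal A) : Type _ := I.ringCon.Quotient

/-- The quotient map `A → A/I` as a `K`-algebra homomorphism. -/
noncomputable def TwoSidedIdeal.πAlg (K : Type) [Field K] {A : Type} [Ring A] [Algebra K A]
    (I : TwoSidedIdeal A) : A →ₐ[K] I.Qt :=
  { I.ringCon.mk' with commutes' := fun _ => rfl }

/-- The degree-`n` homogeneous component of the quotient algebra `KQ/I`: the image of the
span of the paths of length `n`. -/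
noncomputable def PathAlgebraSpec.degQuot (S : PathAlgebraSpec K V A) (I : TwoSidedIdeal A)
    (n : ℕ) : Submodule K I.Qt :=
  Submodule.map (TwoSidedIdeal.πAlg K I).toLinearMap (S.degSpan n)

/-- The positively graded part `Z⁺(KQ/I) = ⊕_{i ≥ 1} Zⁱ(KQ/I)` of the center of `KQ/I`. -/
noncomputable def PathAlgebraSpec.ZPlus (S : PathAlgebraSpec K V A) (I : TwoSidedIdeal A) :
    Submodule K I.Qt :=
  ⨆ i : ℕ, (Subalgebra.toSubmodule (Subalgebra.center K I.Qt) ⊓ S.degQuot I (i + 1))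

/-- The even part `Z^ev(KQ/I) = ⊕_{k ≥ 0} Z^{2k}(KQ/I)` of the center of `KQ/I`. -/
noncomputable def PathAlgebraSpec.ZEv (S : PathAlgebraSpec K V A) (I : TwoSidedIdeal A) :
    Submodule K I.Qt :=
  ⨆ k : ℕ, (Subalgebra.toSubmodule (Subalgebra.center K I.Qt) ⊓ S.degQuot I (2 * k))

/-- A subset of an algebra (e.g. the carrier of a graded part of the center) is finitely
generated as a `K`-algebra if it coincides with the subalgebra generated by a finite subset
of itself. -/
def FinGenAsAlgebra (K : Type) [Field K] {B : Type} [Ring B] [Algebra K B]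
    (M : Set B) : Prop :=
  ∃ s : Finset B, ↑s ⊆ M ∧ M = (Algebra.adjoin K (↑s : Set B) : Set B)

/-- The subquiver `Q_x` of `Q`: its vertices are `x` together with all endpoints of arrows
incident to `x`, and its arrows are the arrows of `Q` with origin or target `x`. -/
def Nbhd (x : V) : Type :=
  {v : V // v = x ∨ ∃ e : QArr V, (e.src = x ∨ e.tgt = x) ∧ (e.src = v ∨ e.tgt = v)}

instance (x : V) : Quiver.{0} (Nbhd x) :=
  ⟨fun a b => {e : a.val ⟶ b.val // a.val = x ∨ b.val = x}⟩

/-- The inclusion of the arrows of `Q_x` into the arrows of `Q`. -/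
def Nbhd.arrToV {x : V} (E : QArr (Nbhd x)) : QArr V := ⟨E.1.val, E.2.1.val, E.2.2.val⟩

/-- The generating set of the ideal `I_x` of `KQ_x`: those generating relations of `I` all
of whose arrows lie in `Q_x`. -/
def QuadGens.restrict (G : QuadGens V) (x : V) : QuadGens (Nbhd x) where
  mono := {p | (Nbhd.arrToV p.1, Nbhd.arrToV p.2) ∈ G.mono}
  comm := {p | (Nbhd.arrToV p.1, Nbhd.arrToV p.2) ∈ G.comm}

/-- One swap of two adjacent letters (related by `R`) in a word of arrows. -/
inductive SwapStep (R : QArr V → QArr V → Prop) : List (QArr V) → List (QArr V) → Prop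
  | swap (u w : List (QArr V)) {a b : QArr V} (h : R a b) :
      SwapStep R (u ++ a :: b :: w) (u ++ b :: a :: w)

/-- `NSwap R n l m` means the word `m` is obtained from the word `l` by exactly `n`
swaps of adjacent letters related by `R`. -/
inductive NSwap (R : QArr V → QArr V → Prop) : ℕ → List (QArr V) → List (QArr V) → Prop
  | refl (l : List (QArr V)) : NSwap R 0 l l
  | step {n : ℕ} {l m k : List (QArr V)} :
      SwapStep R l k → NSwap R n k m → NSwap R (n + 1) l m

/-- The transposition `(ab)` is allowed if `ab ∉ I` and `ab ∓ ba` is one of the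
(anti-)commutativity generators. -/
def AllowedTransposition (S : PathAlgebraSpec K V A) (G : QuadGens V) (I : TwoSidedIdeal A)
    (a b : QArr V) : Prop :=
  S.arr a * S.arr b ∉ I ∧ ((a, b) ∈ G.comm ∨ (b, a) ∈ G.comm)

/-- Two paths are equivalent by exactly `n` allowed transpositions. -/
def PathEquivN (S : PathAlgebraSpec K V A) (G : QuadGens V) (I : TwoSidedIdeal A)
    (n : ℕ) (p q : QPath V) : Prop :=
  p.src = q.src ∧ p.tgt = q.tgt ∧
    NSwap (AllowedTransposition S G I) n p.arrows q.arrows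

/-- Two paths are equivalent, `p ∼ q`, if one is obtained from the other by a sequence of
allowed transpositions. -/
def PathEquiv (S : PathAlgebraSpec K V A) (G : QuadGens V) (I : TwoSidedIdeal A)
    (p q : QPath V) : Prop :=
  ∃ n : ℕ, PathEquivN S G I n p q

/-- The undirected-edge relation of the generator/relation graph: `a — b` whenever
`ab ∓ ba` is one of the (anti-)commutativity generators. -/
def UndirEdge (G : QuadGens V) (a b : QArr V) : Prop :=
  (a, b) ∈ G.comm ∨ (b, a) ∈ G.comm

/-- The directed-edge relation of the relation graph `Γ_rel`: `a → b` whenever `ab = 0`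
in `KQ/I`. -/
def RelDirEdge (S : PathAlgebraSpec K V A) (I : TwoSidedIdeal A) (a b : QArr V) : Prop :=
  S.arr a * S.arr b ∈ I

/-- A clique in the relation graph: a set of vertices pairwise joined by undirected edges. -/
def GraphClique (G : QuadGens V) (s : Set (QArr V)) : Prop :=
  ∀ a ∈ s, ∀ b ∈ s, a ≠ b → UndirEdge G a b

/-- The condition of Theorem `rel-graph`(i) on a set of vertices of the relation graph:
it is a clique of loops, and every other vertex `b` either has a directed edge from the
clique to `b` and one from `b` to the clique, or can be adjoined to the clique. -/
def CliqueCond (S : PathAlgebraSpec K V A) (G : QuadGens V) (I : TwoSidedIdeal A)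
    (s : Set (QArr V)) : Prop :=
  (∀ a ∈ s, a.IsLoop) ∧ GraphClique G s ∧
    ∀ b : QArr V, b ∉ s →
      ((∃ a ∈ s, RelDirEdge S I a b) ∧ (∃ a ∈ s, RelDirEdge S I b a)) ∨
        GraphClique G (insert b s)

open scoped Classical in
/-- The number of occurrences of an arrow in a list of arrows. -/
noncomputable def acount (l : List (QArr V)) (a : QArr V) : ℕ := l.count a


/-! Each allowed transposition changes a monomial by a multiple of a generator `ab - ba`, which
gives the converse direction. For the direct one, let `T` be the set of monomials equivalent to one
with a quadratic factor in `I`, and `J` the span of `T` together with all differences `p - q` of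
equivalent monomials. Since `T` and `∼` are stable under composition, `J` is an ideal. It contains
the generators of `I`: an allowed transposition `(ab)` swaps two loops at a common vertex, so that
`ab - ba` is a difference of equivalent monomials. Hence `I ⊆ J`, and the linear form that is `1`
on the class of `m` and `0` on all other paths vanishes on `J` as soon as `m ∉ T`. -/

open Relation

namespace Quiver.Path

@[simp] lemma arrList_nil {a : V} : (nil : Path a a).arrList = [] := by
  simp [arrList]

@[simp] lemma arrList_cons {a b c : V} (p : Path a b) (e : b ⟶ c) :
    (p.cons e).arrList = p.arrList ++ ([⟨b, c, e⟩] : List (QArr V)) := by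
  simp [arrList]

lemma arrList_cast {a b a' b' : V} (p : Path a b) (h : a = a') (h' : b = b') :
    (p.cast h h').arrList = p.arrList := by
  subst h h'
  rfl

lemma arrList_comp {a b c : V} (p : Path a b) (q : Path b c) :
    (p.comp q).arrList = p.arrList ++ q.arrList := by
  induction q with
  | nil => simp
  | cons q e ih => simp [ih]

end Quiver.Path

namespace QPath

lemma arrows_ofArrow (e : QArr V) : (ofArrow e).arrows = [e] := by
  simp [arrows, ofArrow, Hom.toPath]
  rfl

lemma arrows_comp (p q : QPath V) (h : p.tgt = q.src) :
    (p.comp q h).arrows = p.arrows ++ q.arrows := by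
  simp only [arrows, comp, Path.arrList_comp, Path.arrList_cast]

lemma arrows_ofArrow_comp_ofArrow (a b : QArr V) (h : a.tgt = b.src) :
    ((ofArrow a).comp (ofArrow b) h).arrows = [a, b] :=
  (arrows_comp (ofArrow a) (ofArrow b) h).trans (by rw [arrows_ofArrow, arrows_ofArrow]; rfl)

lemma triv_comp (p : QPath V) : (triv p.src).comp p rfl = p := by
  simp [comp, triv]

lemma mk_comp_ofArrow {a b c : V} (p : Path a b) (e : b ⟶ c) :
    (QPath.mk a b p).comp (ofArrow ⟨b, c, e⟩) rfl = ⟨a, c, p.cons e⟩ := by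
  simp [comp, ofArrow]

end QPath

namespace PathAlgebraSpec

variable (S : PathAlgebraSpec K V A)

noncomputable def wordProd (l : List (QArr V)) : A := (l.map S.arr).prod

@[simp] lemma wordProd_nil : S.wordProd [] = 1 := rfl

@[simp] lemma wordProd_cons (e : QArr V) (l : List (QArr V)) :
    S.wordProd (e :: l) = S.arr e * S.wordProd l := by
  simp [wordProd]

@[simp] lemma wordProd_append (l₁ l₂ : List (QArr V)) :
    S.wordProd (l₁ ++ l₂) = S.wordProd l₁ * S.wordProd l₂ := by
  simp [wordProd]

lemma triv_mul_basis (p : QPath V) : S.basis (QPath.triv p.src) * S.basis p = S.basis p := by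
  rw [S.basis_mul _ _ rfl, QPath.triv_comp]

lemma basis_eq_triv_mul_wordProd (m : QPath V) :
    S.basis m = S.basis (QPath.triv m.src) * S.wordProd m.arrows := by
  obtain ⟨a, b, p⟩ := m
  induction p with
  | nil =>
    simp [QPath.arrows, QPath.triv]
  | @cons b c p e ih =>
    have hcons : S.basis ⟨a, c, p.cons e⟩ = S.basis ⟨a, b, p⟩ * S.arr ⟨b, c, e⟩ :=
      (QPath.mk_comp_ofArrow p e ▸ S.basis_mul _ _ rfl).symm
    rw [hcons, ih]
    simp only [QPath.arrows, QPath.triv, Quiver.Path.arrList_cons, wordProd_append, mul_assoc]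
    exact congrArg _ (congrArg _ (mul_one _).symm)

end PathAlgebraSpec

lemma TwoSidedIdeal.span_subset_of_basis_mul_mem {ι : Type*} (b : Module.Basis ι K A)
    {N : Submodule K A} (hl : ∀ i, ∀ y ∈ N, b i * y ∈ N) (hr : ∀ i, ∀ y ∈ N, y * b i ∈ N)
    {s : Set A} (hs : s ⊆ N) : (TwoSidedIdeal.span s : Set A) ⊆ N := by
  have mul_mem_of_basis {f : A → A →ₗ[K] A} (hf : ∀ i, ∀ y ∈ N, f y (b i) ∈ N) (x : A)
      {y : A} (hy : y ∈ N) : f y x ∈ N := by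
    have hspan : Submodule.span K (Set.range b) ≤ N.comap (f y) :=
      Submodule.span_le.2 (by rintro _ ⟨i, rfl⟩; exact hf i y hy)
    rw [b.span_eq] at hspan
    exact hspan Submodule.mem_top
  obtain ⟨J, hJ⟩ : ∃ J : TwoSidedIdeal A, (J : Set A) = N :=
    ⟨TwoSidedIdeal.mk' N N.zero_mem N.add_mem N.neg_mem
      (fun {x _} hy => mul_mem_of_basis (f := LinearMap.mulRight K) hl x hy)
      (fun {_ y} hx => mul_mem_of_basis (f := LinearMap.mulLeft K) hr y hx),
      TwoSidedIdeal.coe_mk' ..⟩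
  exact hJ ▸ TwoSidedIdeal.span_le.2 (hJ ▸ hs)

lemma Module.Basis.mem_of_basis_mem_span {ι R M : Type*} [CommRing R] [Nontrivial R]
    [AddCommGroup M] [Module R M] (b : Module.Basis ι R M) {r : ι → ι → Prop}
    (hr : Equivalence r) {T : Set ι} (hT : ∀ {i j}, r i j → j ∈ T → i ∈ T) {i : ι}
    (hi : b i ∈ Submodule.span R (b '' T ∪ {x | ∃ j k, r j k ∧ x = b j - b k})) : i ∈ T := by
  classical
  by_contra hiT
  let φ : M →ₗ[R] R := b.constr R fun j => if r i j then 1 else 0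
  have hφ : Submodule.span R (b '' T ∪ {x | ∃ j k, r j k ∧ x = b j - b k}) ≤
      LinearMap.ker φ := by
    refine Submodule.span_le.2 ?_
    rintro _ (⟨j, hj, rfl⟩ | ⟨j, k, hjk, rfl⟩)
    · simpa [φ] using fun hij => hiT (hT hij hj)
    · have hiff : r i j ↔ r i k := ⟨(hr.trans · hjk), (hr.trans · (hr.symm hjk))⟩
      simp [φ, hiff]
  simpa [φ, hr.refl i] using hφ hi

namespace SwapStep

variable {R : QArr V → QArr V → Prop} {l k : List (QArr V)}

lemma symm (hR : ∀ {a b}, R a b → R b a) (h : SwapStep R l k) : SwapStep R k l := by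
  obtain ⟨u, w, hab⟩ := h
  exact swap u w (hR hab)

lemma append_left (c : List (QArr V)) (h : SwapStep R l k) : SwapStep R (c ++ l) (c ++ k) := by
  obtain ⟨u, w, hab⟩ := h
  simpa using swap (c ++ u) w hab

lemma append_right (c : List (QArr V)) (h : SwapStep R l k) : SwapStep R (l ++ c) (k ++ c) := by
  obtain ⟨u, w, hab⟩ := h
  simpa using swap u (w ++ c) hab

end SwapStep

lemma nSwap_iff_reflTransGen {R : QArr V → QArr V → Prop} {l k : List (QArr V)} :
    (∃ n, NSwap R n l k) ↔ ReflTransGen (SwapStep R) l k := by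
  constructor
  · rintro ⟨n, h⟩
    induction h with
    | refl => exact ReflTransGen.refl
    | step hs _ ih => exact ReflTransGen.head hs ih
  · intro h
    induction h using ReflTransGen.head_induction_on with
    | refl => exact ⟨0, NSwap.refl _⟩
    | head hs _ ih =>
      obtain ⟨n, hn⟩ := ih
      exact ⟨n + 1, NSwap.step hs hn⟩

section

variable (S : PathAlgebraSpec K V A) (G : QuadGens V) (I : TwoSidedIdeal A)

lemma pathEquiv_iff {p q : QPath V} :
    PathEquiv S G I p q ↔ p.src = q.src ∧ p.tgt = q.tgt ∧
      ReflTransGen (SwapStep (AllowedTransposition S G I)) p.arrows q.arrows := by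
  simp only [PathEquiv, PathEquivN, ← nSwap_iff_reflTransGen]
  exact ⟨fun ⟨n, h₁, h₂, h⟩ => ⟨h₁, h₂, n, h⟩, fun ⟨h₁, h₂, n, h⟩ => ⟨n, h₁, h₂, h⟩⟩

lemma arr_mul_sub_mem_of_undirEdge (hG : G.gensSet S 1 ⊆ I) {a b : QArr V}
    (h : UndirEdge G a b) : S.arr a * S.arr b - S.arr b * S.arr a ∈ I := by
  rcases h with h | h
  · simpa using hG (Or.inr ⟨(a, b), h, rfl⟩)
  · simpa using I.neg_mem (hG (Or.inr ⟨(b, a), h, rfl⟩))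

variable {S G I}

namespace AllowedTransposition

variable {a b : QArr V}

lemma symm (hG : G.gensSet S 1 ⊆ I) (h : AllowedTransposition S G I a b) :
    AllowedTransposition S G I b a :=
  ⟨fun hba => h.1 (by simpa using I.add_mem (arr_mul_sub_mem_of_undirEdge S G I hG h.2) hba),
    h.2.symm⟩

lemma isLoop (hG : G.gensSet S 1 ⊆ I) (h : AllowedTransposition S G I a b) :
    a.IsLoop ∧ b.IsLoop ∧ a.src = b.src := by
  have composable {c d : QArr V} (hcd : AllowedTransposition S G I c d) : c.tgt = d.src := by
    by_contra hne
    exact hcd.1 (S.basis_mul_zero (QPath.ofArrow c) (QPath.ofArrow d) hne ▸ I.zero_mem)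
  have hsrc : a.src = b.src := by
    by_contra hne
    -- the idempotent at `a.src` fixes `a` and kills `b`, so it turns `ab - ba` into `ab`
    have hfix : S.basis (QPath.triv a.src) * S.arr a = S.arr a := S.triv_mul_basis (.ofArrow a)
    have hkill : S.basis (QPath.triv a.src) * S.arr b = 0 := S.basis_mul_zero _ _ hne
    have hmem := I.mul_mem_left (S.basis (QPath.triv a.src)) _
      (arr_mul_sub_mem_of_undirEdge S G I hG h.2)
    rw [mul_sub, ← mul_assoc, ← mul_assoc, hfix, hkill, zero_mul, sub_zero] at hmem
    exact h.1 hmem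
  exact ⟨hsrc.trans (composable h).symm, hsrc.symm.trans (composable (h.symm hG)).symm, hsrc⟩

end AllowedTransposition

namespace PathEquiv

variable {p q r : QPath V}

lemma src_eq (h : PathEquiv S G I p q) : p.src = q.src := ((pathEquiv_iff S G I).1 h).1

lemma tgt_eq (h : PathEquiv S G I p q) : p.tgt = q.tgt := ((pathEquiv_iff S G I).1 h).2.1

lemma refl (p : QPath V) : PathEquiv S G I p p := ⟨0, rfl, rfl, NSwap.refl _⟩

lemma trans (h : PathEquiv S G I p q) (h' : PathEquiv S G I q r) : PathEquiv S G I p r := by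
  obtain ⟨h₁, h₂, h₃⟩ := (pathEquiv_iff S G I).1 h
  obtain ⟨h₁', h₂', h₃'⟩ := (pathEquiv_iff S G I).1 h'
  exact (pathEquiv_iff S G I).2 ⟨h₁.trans h₁', h₂.trans h₂', h₃.trans h₃'⟩

lemma symm (hG : G.gensSet S 1 ⊆ I) (h : PathEquiv S G I p q) : PathEquiv S G I q p := by
  obtain ⟨h₁, h₂, h₃⟩ := (pathEquiv_iff S G I).1 h
  refine (pathEquiv_iff S G I).2 ⟨h₁.symm, h₂.symm, ?_⟩
  exact ReflTransGen.mono (fun _ _ hs => SwapStep.symm (AllowedTransposition.symm hG) hs) _ _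
    (reflTransGen_swap.2 h₃)

lemma equivalence (hG : G.gensSet S 1 ⊆ I) : Equivalence (PathEquiv S G I) :=
  ⟨refl, symm hG, trans⟩

lemma comp_left (h : PathEquiv S G I p q) (r : QPath V) (hr : r.tgt = p.src) :
    PathEquiv S G I (r.comp p hr) (r.comp q (hr.trans h.src_eq)) := by
  obtain ⟨-, h₂, h₃⟩ := (pathEquiv_iff S G I).1 h
  refine (pathEquiv_iff S G I).2 ⟨rfl, h₂, ?_⟩
  rw [QPath.arrows_comp, QPath.arrows_comp]
  exact h₃.lift (r.arrows ++ ·) fun _ _ => SwapStep.append_left r.arrows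

lemma comp_right (h : PathEquiv S G I p q) (r : QPath V) (hr : p.tgt = r.src) :
    PathEquiv S G I (p.comp r hr) (q.comp r (h.tgt_eq.symm.trans hr)) := by
  obtain ⟨h₁, -, h₃⟩ := (pathEquiv_iff S G I).1 h
  refine (pathEquiv_iff S G I).2 ⟨h₁, rfl, ?_⟩
  rw [QPath.arrows_comp, QPath.arrows_comp]
  exact h₃.lift (· ++ r.arrows) fun _ _ => SwapStep.append_right r.arrows

end PathEquiv

lemma wordProd_sub_mem_of_reflTransGen (hG : G.gensSet S 1 ⊆ I) {l k : List (QArr V)}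
    (h : ReflTransGen (SwapStep (AllowedTransposition S G I)) l k) :
    S.wordProd l - S.wordProd k ∈ I := by
  induction h with
  | refl => simp
  | tail _ hs ih =>
    obtain ⟨u, w, hab⟩ := hs
    have hswap := I.mul_mem_right _ (S.wordProd w)
      (I.mul_mem_left (S.wordProd u) _ (arr_mul_sub_mem_of_undirEdge S G I hG hab.2))
    convert I.add_mem ih hswap using 1
    simp [mul_sub, sub_mul, mul_assoc]

lemma PathEquiv.basis_sub_mem (hG : G.gensSet S 1 ⊆ I) {p q : QPath V}
    (h : PathEquiv S G I p q) : S.basis p - S.basis q ∈ I := by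
  obtain ⟨hsrc, -, h⟩ := (pathEquiv_iff S G I).1 h
  rw [S.basis_eq_triv_mul_wordProd p, S.basis_eq_triv_mul_wordProd q, ← hsrc, ← mul_sub]
  exact I.mul_mem_left _ _ (wordProd_sub_mem_of_reflTransGen hG h)

variable (S I) in
def HasQuadraticFactor (m : QPath V) : Prop :=
  ∃ (a b : QArr V) (l₁ l₂ : List (QArr V)),
    m.arrows = l₁ ++ a :: b :: l₂ ∧ S.arr a * S.arr b ∈ I

namespace HasQuadraticFactor

variable {m : QPath V}

lemma basis_mem (h : HasQuadraticFactor S I m) : S.basis m ∈ I := by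
  obtain ⟨a, b, l₁, l₂, harr, hab⟩ := h
  rw [S.basis_eq_triv_mul_wordProd, harr]
  simpa [mul_assoc] using
    I.mul_mem_left (S.basis (QPath.triv m.src) * S.wordProd l₁) _ (I.mul_mem_right _ _ hab)

lemma comp_left (h : HasQuadraticFactor S I m) (r : QPath V) (hr : r.tgt = m.src) :
    HasQuadraticFactor S I (r.comp m hr) := by
  obtain ⟨a, b, l₁, l₂, harr, hab⟩ := h
  exact ⟨a, b, r.arrows ++ l₁, l₂, by simp [QPath.arrows_comp, harr], hab⟩

lemma comp_right (h : HasQuadraticFactor S I m) (r : QPath V) (hr : m.tgt = r.src) :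
    HasQuadraticFactor S I (m.comp r hr) := by
  obtain ⟨a, b, l₁, l₂, harr, hab⟩ := h
  exact ⟨a, b, l₁, l₂ ++ r.arrows, by simp [QPath.arrows_comp, harr], hab⟩

end HasQuadraticFactor

variable (S G I) in
def quadReducible : Set (QPath V) :=
  {m | ∃ m', PathEquiv S G I m m' ∧ HasQuadraticFactor S I m'}

variable (S G I) in
noncomputable def monomialSpan : Submodule K A :=
  Submodule.span K
    (S.basis '' quadReducible S G I ∪
      {x | ∃ p q, PathEquiv S G I p q ∧ x = S.basis p - S.basis q})

lemma basis_mul_mem_monomialSpan (r : QPath V) {y : A} (hy : y ∈ monomialSpan S G I) :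
    S.basis r * y ∈ monomialSpan S G I := by
  refine (Submodule.span_le.2 ?_ : _ ≤ (monomialSpan S G I).comap (LinearMap.mulLeft K _)) hy
  rintro _ (⟨p, ⟨p', hpp', hp'⟩, rfl⟩ | ⟨p, q, hpq, rfl⟩)
  · by_cases hr : r.tgt = p.src
    · exact Submodule.subset_span (Or.inl ⟨r.comp p hr, ⟨_, hpp'.comp_left r hr,
        hp'.comp_left r _⟩, (S.basis_mul r p hr).symm⟩)
    · simp [S.basis_mul_zero r p hr]
  · by_cases hr : r.tgt = p.src
    · refine Submodule.subset_span (Or.inr ⟨_, _, hpq.comp_left r hr, ?_⟩)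
      simp [mul_sub, S.basis_mul r p hr, S.basis_mul r q (hr.trans hpq.src_eq)]
    · have hr' : r.tgt ≠ q.src := hpq.src_eq ▸ hr
      simp [mul_sub, S.basis_mul_zero r p hr, S.basis_mul_zero r q hr']

lemma mem_monomialSpan_mul_basis (r : QPath V) {y : A} (hy : y ∈ monomialSpan S G I) :
    y * S.basis r ∈ monomialSpan S G I := by
  refine (Submodule.span_le.2 ?_ : _ ≤ (monomialSpan S G I).comap (LinearMap.mulRight K _)) hy
  rintro _ (⟨p, ⟨p', hpp', hp'⟩, rfl⟩ | ⟨p, q, hpq, rfl⟩)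
  · by_cases hr : p.tgt = r.src
    · exact Submodule.subset_span (Or.inl ⟨p.comp r hr, ⟨_, hpp'.comp_right r hr,
        hp'.comp_right r _⟩, (S.basis_mul p r hr).symm⟩)
    · simp [S.basis_mul_zero p r hr]
  · by_cases hr : p.tgt = r.src
    · refine Submodule.subset_span (Or.inr ⟨_, _, hpq.comp_right r hr, ?_⟩)
      simp [sub_mul, S.basis_mul p r hr, S.basis_mul q r (hpq.tgt_eq.symm.trans hr)]
    · have hr' : q.tgt ≠ r.src := hpq.tgt_eq ▸ hr
      simp [sub_mul, S.basis_mul_zero p r hr, S.basis_mul_zero q r hr']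

lemma arr_mul_arr_mem_monomialSpan {a b : QArr V} (hab : S.arr a * S.arr b ∈ I) :
    S.arr a * S.arr b ∈ monomialSpan S G I := by
  by_cases hc : a.tgt = b.src
  · rw [PathAlgebraSpec.arr, PathAlgebraSpec.arr, S.basis_mul _ _ hc]
    refine Submodule.subset_span (Or.inl ⟨_, ⟨_, PathEquiv.refl _, a, b, [], [], ?_, hab⟩, rfl⟩)
    exact QPath.arrows_ofArrow_comp_ofArrow a b hc
  · rw [show S.arr a * S.arr b = 0 from S.basis_mul_zero _ _ hc]
    exact zero_mem _

lemma AllowedTransposition.arr_mul_sub_mem_monomialSpan (hG : G.gensSet S 1 ⊆ I) {a b : QArr V}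
    (h : AllowedTransposition S G I a b) :
    S.arr a * S.arr b - S.arr b * S.arr a ∈ monomialSpan S G I := by
  obtain ⟨ha, hb, hab⟩ := h.isLoop hG
  have hc : a.tgt = b.src := ha.symm.trans hab
  have hc' : b.tgt = a.src := hb.symm.trans hab.symm
  rw [PathAlgebraSpec.arr, PathAlgebraSpec.arr, S.basis_mul _ _ hc, S.basis_mul _ _ hc']
  refine Submodule.subset_span (Or.inr ⟨_, _, (pathEquiv_iff S G I).2 ⟨hab, ?_, ?_⟩, rfl⟩)
  · exact hb.symm.trans (hab.symm.trans ha)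
  · rw [QPath.arrows_ofArrow_comp_ofArrow, QPath.arrows_ofArrow_comp_ofArrow]
    exact ReflTransGen.single (SwapStep.swap [] [] h)

lemma gensSet_subset_monomialSpan (hG : G.gensSet S 1 ⊆ I) :
    G.gensSet S 1 ⊆ monomialSpan S G I := by
  rintro _ (⟨⟨a, b⟩, hab, rfl⟩ | ⟨⟨a, b⟩, hab, rfl⟩)
  · exact arr_mul_arr_mem_monomialSpan (hG (Or.inl ⟨_, hab, rfl⟩))
  · rw [one_smul]
    by_cases habI : S.arr a * S.arr b ∈ I
    · have hbaI : S.arr b * S.arr a ∈ I := by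
        simpa using I.sub_mem habI (arr_mul_sub_mem_of_undirEdge S G I hG (Or.inl hab))
      exact sub_mem (arr_mul_arr_mem_monomialSpan habI) (arr_mul_arr_mem_monomialSpan hbaI)
    · exact AllowedTransposition.arr_mul_sub_mem_monomialSpan hG ⟨habI, Or.inl hab⟩

end

theorem stmt_15_general {V : Type} [Quiver.{0} V]
    {K : Type} [Field K]
    {A : Type} [Ring A] [Algebra K A]
    (S : PathAlgebraSpec K V A)
    (G : QuadGens V)
    (I : TwoSidedIdeal A) (hI : I = TwoSidedIdeal.span (G.gensSet S 1)) :
    ∀ m : QPath V,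
      S.basis m ∈ I ↔
        ∃ m' : QPath V, PathEquiv S G I m m' ∧
          ∃ (a b : QArr V) (l₁ l₂ : List (QArr V)),
            m'.arrows = l₁ ++ a :: b :: l₂ ∧ S.arr a * S.arr b ∈ I := by
  have hG : G.gensSet S 1 ⊆ I := hI ▸ TwoSidedIdeal.subset_span
  intro m
  constructor
  · intro hm
    have hspan : S.basis m ∈ monomialSpan S G I :=
      TwoSidedIdeal.span_subset_of_basis_mul_mem S.basis
        (fun r _ => basis_mul_mem_monomialSpan r) (fun r _ => mem_monomialSpan_mul_basis r)
        (gensSet_subset_monomialSpan hG) (hI ▸ hm)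
    exact S.basis.mem_of_basis_mem_span (T := quadReducible S G I) (PathEquiv.equivalence hG)
      (fun h ⟨m', hm', hf⟩ => ⟨m', h.trans hm', hf⟩) hspan
  · rintro ⟨m', hmm', hm'⟩
    simpa using I.add_mem (hmm'.basis_sub_mem hG) (HasQuadraticFactor.basis_mem hm')

/-- For a commutativity ideal `I` with minimal generating set `I₂`:
a monomial `m` lies in `I` if and only if `m` is equivalent, under allowed transpositions,
to a monomial of the form `p · ab · q` with `ab ∈ I`. -/
theorem stmt_15 {V : Type} [Quiver.{0} V] [Finite V] [Finite (QArr V)]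
    {K : Type} [Field K] [IsAlgClosed K]
    {A : Type} [Ring A] [Algebra K A]
    (hconn : QuiverConnected V)
    (S : PathAlgebraSpec K V A)
    (G : QuadGens V) (hmin : G.Minimal)
    (I : TwoSidedIdeal A) (hI : I = TwoSidedIdeal.span (G.gensSet S 1)) :
    ∀ m : QPath V,
      S.basis m ∈ I ↔
        ∃ m' : QPath V, PathEquiv S G I m m' ∧
          ∃ (a b : QArr V) (l₁ l₂ : List (QArr V)),
            m'.arrows = l₁ ++ a :: b :: l₂ ∧ S.arr a * S.arr b ∈ I :=
  stmt_15_general S G I hI
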